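/- For any natural number s and any p ∈ (0,1), the derivative with respect to p of P(Bin(s,p)=m) = C(s,m) p^m (1−p)^{s−m} has absolute value at most s, for every m ≤ s. -/

import Mathlib

/-!
The binomial point probability is the Bernstein polynomial `b_{s,m}`, whose derivative is
`s (b_{s-1,m-1} - b_{s-1,m})` (or `-s b_{s-1,0}` when `m = 0`). On `[0,1]` every Bernstein
polynomial takes values in `[0,1]`, being one term of the partition of unity
`∑ₖ b_{n,k} = 1`, so the difference in brackets has absolute value at most `1`.
-/

open Set unitInterval

theorem bernstein_le_one (n ν : ℕ) (x : I) : bernstein n ν x ≤ 1 := by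
  rcases lt_or_ge n ν with h | h
  · simp [bernstein_apply, Nat.choose_eq_zero_of_lt h]
  · calc bernstein n ν x = bernstein n (⟨ν, Nat.lt_succ_of_le h⟩ : Fin (n + 1)) x := rfl
      _ ≤ ∑ k : Fin (n + 1), bernstein n k x :=
        Finset.single_le_sum (fun _ _ => bernstein_nonneg) (Finset.mem_univ _)
      _ = 1 := bernstein.probability n x

namespace bernsteinPolynomial

theorem eval_mem_Icc (n ν : ℕ) {x : ℝ} (hx : x ∈ Icc 0 1) :
    (bernsteinPolynomial ℝ n ν).eval x ∈ Icc 0 1 :=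
  ⟨bernstein_nonneg (x := ⟨x, hx⟩), bernstein_le_one n ν ⟨x, hx⟩⟩

theorem abs_eval_derivative_le (n ν : ℕ) {x : ℝ} (hx : x ∈ Icc 0 1) :
    |(Polynomial.derivative (bernsteinPolynomial ℝ n ν)).eval x| ≤ n := by
  cases ν with
  | zero =>
    obtain ⟨h0, h1⟩ := eval_mem_Icc (n - 1) 0 hx
    rw [derivative_zero, Polynomial.eval_mul, abs_mul]
    simpa [abs_of_nonneg h0] using mul_le_of_le_one_right n.cast_nonneg h1
  | succ ν =>
    obtain ⟨ha0, ha1⟩ := eval_mem_Icc (n - 1) ν hx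
    obtain ⟨hb0, hb1⟩ := eval_mem_Icc (n - 1) (ν + 1) hx
    have hdiff : |(bernsteinPolynomial ℝ (n - 1) ν).eval x
        - (bernsteinPolynomial ℝ (n - 1) (ν + 1)).eval x| ≤ 1 :=
      abs_sub_le_iff.mpr ⟨by linarith, by linarith⟩
    rw [derivative_succ, Polynomial.eval_mul, Polynomial.eval_sub, abs_mul]
    simpa using mul_le_of_le_one_right n.cast_nonneg hdiff

end bernsteinPolynomial

theorem binomial_pmf_deriv_bound_general (s m : ℕ) (p : ℝ)
    (hp : p ∈ Set.Ioo (0 : ℝ) 1) :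
    |deriv (fun q : ℝ => (s.choose m : ℝ) * q ^ m * (1 - q) ^ (s - m)) p| ≤ s := by
  have hpmf : (fun q : ℝ => (s.choose m : ℝ) * q ^ m * (1 - q) ^ (s - m)) =
      fun q => (bernsteinPolynomial ℝ s m).eval q := by
    funext q
    simp [bernsteinPolynomial]
  rw [hpmf, Polynomial.deriv]
  exact bernsteinPolynomial.abs_eval_derivative_le s m (Ioo_subset_Icc_self hp)

theorem binomial_pmf_deriv_bound (s m : ℕ) (hm : m ≤ s) (p : ℝ)
    (hp : p ∈ Set.Ioo (0 : ℝ) 1) :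
    |deriv (fun q : ℝ => (s.choose m : ℝ) * q ^ m * (1 - q) ^ (s - m)) p| ≤ s :=
  binomial_pmf_deriv_bound_general s m p hp
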